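/- arXiv:0709.0743 — 6 statements merged into one kernel-verified Lean document; each statement's English description precedes it below -/
import Mathlib

section
/- Let S be a transitive subsemigroup of the symmetric inverse semigroup IS(X) on a set X (i.e., for every ordered pair (x,y) in X×X there exists φ ∈ S with x in the domain of φ and φ(x) = y), and let I be a nonzero ideal of S (an ideal containing some nonzero partial bijection). Then I is itself a transitive set of partial bijections of X. -/
/-- A set of partial bijections is a subsemigroup if closed under composition
(written left-to-right via `PEquiv.trans`). -/
def IsSubsemigroup {X : Type*} (S : Set (X ≃. X)) : Prop :=
  ∀ f ∈ S, ∀ g ∈ S, f.trans g ∈ S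

/-- A set of partial bijections of `X` is transitive if every ordered pair is realized. -/
def IsTransitiveSet {X : Type*} (S : Set (X ≃. X)) : Prop :=
  ∀ x y : X, ∃ f ∈ S, f x = some y

/-- `I` is an ideal of the subsemigroup `S`. -/
def IsIdealOf {X : Type*} (I S : Set (X ≃. X)) : Prop :=
  I ⊆ S ∧ ∀ f ∈ S, ∀ g ∈ I, f.trans g ∈ I ∧ g.trans f ∈ I

theorem transitive_ideal {X : Type*} (S I : Set (X ≃. X))
    (hS : IsSubsemigroup S) (hStr : IsTransitiveSet S)
    (hI : IsIdealOf I S) (hne : ∃ g ∈ I, g ≠ (⊥ : X ≃. X)) :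
    IsTransitiveSet I := by
  intro x y
  obtain ⟨g, hgI, hg⟩ := hne
  have : ∃ a b, g a = some b := by
    by_contra h
    push_neg at h
    apply hg
    ext a b
    simp only [PEquiv.bot_apply]
    cases hga : g a with
    | none => simp
    | some b => exact absurd hga (h a b)
  obtain ⟨a, b, hab⟩ := this
  obtain ⟨φ, hφS, hφ⟩ := hStr x a
  obtain ⟨ψ, hψS, hψ⟩ := hStr b y
  refine ⟨(φ.trans g).trans ψ, ?_, ?_⟩
  · exact (hI.2 ψ hψS _ ((hI.2 φ hφS g hgI).1)).2
  · rw [PEquiv.trans_eq_some]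
    exact ⟨b, by rw [PEquiv.trans_eq_some]; exact ⟨a, hφ, hab⟩, hψ⟩
end

section
/- A subsemigroup of IS(X) that is minimal among transitive subsemigroups (with respect to inclusion) and contains the zero element is 0-simple: every nonzero ideal of it equals the whole semigroup, and its square is not the zero ideal. -/
/-! Transitivity of `S` lets any nonzero `g : a ↦ b` in an ideal `I` be wrapped as `f.trans (g.trans h)`
with `f : x ↦ a` and `h : b ↦ y` from `S`; this lands in `I`, so `I` is itself a transitive subsemigroup
and minimality forces `I = S`. For `S² ≠ {0}`, an element of `S` moving `x` to `x` squares to a nonzero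
element; when `X` is empty, `∅` is transitive, so minimality would make `S` empty, contradicting `0 ∈ S`. -/

namespace PEquiv

variable {α β γ : Type*}

theorem exists_apply_eq_some_of_ne_bot {f : α ≃. β} (hf : f ≠ ⊥) : ∃ a b, f a = some b := by
  by_contra! h
  exact hf (ext fun a => by simpa [Option.eq_none_iff_forall_ne_some] using h a)

theorem trans_apply_eq_some {f : α ≃. β} {g : β ≃. γ} {a : α} {b : β} {c : γ}
    (hf : f a = some b) (hg : g b = some c) : f.trans g a = some c :=
  (trans_eq_some f g a c).2 ⟨b, hf, hg⟩

end PEquiv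

section

variable {X : Type*} {I S : Set (X ≃. X)}

theorem isTransitiveSet_of_isEmpty [IsEmpty X] (S : Set (X ≃. X)) : IsTransitiveSet S :=
  fun x => isEmptyElim x

theorem IsTransitiveSet.exists_trans_ne_bot [Nonempty X] (hS : IsTransitiveSet S) :
    ∃ f ∈ S, ∃ g ∈ S, f.trans g ≠ ⊥ := by
  obtain ⟨x⟩ := ‹Nonempty X›
  obtain ⟨f, hf, hfx⟩ := hS x x
  refine ⟨f, hf, f, hf, fun h => ?_⟩
  simpa [h] using PEquiv.trans_apply_eq_some hfx hfx

theorem IsIdealOf.isSubsemigroup (hI : IsIdealOf I S) : IsSubsemigroup I :=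
  fun f hf g hg => (hI.2 f (hI.1 hf) g hg).1

theorem IsIdealOf.isTransitiveSet (hI : IsIdealOf I S) (hS : IsTransitiveSet S)
    {g : X ≃. X} (hgI : g ∈ I) (hg : g ≠ ⊥) : IsTransitiveSet I := by
  obtain ⟨a, b, hab⟩ := PEquiv.exists_apply_eq_some_of_ne_bot hg
  intro x y
  obtain ⟨f, hfS, hfx⟩ := hS x a
  obtain ⟨h, hhS, hhb⟩ := hS b y
  refine ⟨f.trans (g.trans h), (hI.2 f hfS _ (hI.2 h hhS g hgI).2).1, ?_⟩
  exact PEquiv.trans_apply_eq_some hfx (PEquiv.trans_apply_eq_some hab hhb)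

end

theorem minimal_transitive_is_zero_simple_general {X : Type*} (S : Set (X ≃. X))
    (hStr : IsTransitiveSet S)
    (hzero : (⊥ : X ≃. X) ∈ S)
    (hmin : ∀ T ⊆ S, IsSubsemigroup T → IsTransitiveSet T → T = S) :
    (∃ f ∈ S, ∃ g ∈ S, f.trans g ≠ (⊥ : X ≃. X)) ∧
      ∀ I : Set (X ≃. X), IsIdealOf I S → (∃ g ∈ I, g ≠ (⊥ : X ≃. X)) → I = S := by
  refine ⟨?_, fun I hI ⟨g, hgI, hg⟩ =>
    hmin I hI.1 hI.isSubsemigroup (hI.isTransitiveSet hStr hgI hg)⟩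
  cases isEmpty_or_nonempty X
  · have hS_empty : ∅ = S :=
      hmin ∅ (Set.empty_subset S) (fun _ hf => absurd hf (Set.notMem_empty _))
        (isTransitiveSet_of_isEmpty ∅)
    exact absurd (hS_empty ▸ hzero) (Set.notMem_empty _)
  · exact hStr.exists_trans_ne_bot

/-- A minimal transitive subsemigroup of `IS(X)` containing the zero element is
`0`-simple: its square is not `{0}` and every nonzero ideal is the whole semigroup. -/
theorem minimal_transitive_is_zero_simple {X : Type*} (S : Set (X ≃. X))
    (hS : IsSubsemigroup S) (hStr : IsTransitiveSet S)
    (hzero : (⊥ : X ≃. X) ∈ S)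
    (hmin : ∀ T ⊆ S, IsSubsemigroup T → IsTransitiveSet T → T = S) :
    (∃ f ∈ S, ∃ g ∈ S, f.trans g ≠ (⊥ : X ≃. X)) ∧
      ∀ I : Set (X ≃. X), IsIdealOf I S → (∃ g ∈ I, g ≠ (⊥ : X ≃. X)) → I = S :=
  minimal_transitive_is_zero_simple_general S hStr hzero hmin
end

section
/- Let X be a set and let φ, ψ be finitary partial bijections of X (elements of IS(X) of finite rank) such that rank(φψφ) = rank(φ) and rank(ψφψ) = rank(ψ) and rank(ψ) ≤ rank(φ). Then the range of φ equals the domain of ψ and the range of ψ equals the domain of φ. -/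
/-- The domain of a partial bijection. -/
def pdom {X : Type*} (f : X ≃. X) : Set X := {x | f x ≠ none}

/-- The range of a partial bijection. -/
def pran {X : Type*} (f : X ≃. X) : Set X := {y | ∃ x, f x = some y}

/-- The rank of a (finitary) partial bijection: the cardinality of its domain. -/
noncomputable def prank {X : Type*} (f : X ≃. X) : ℕ := (pdom f).ncard

lemma pran_eq_pdom_symm {X : Type*} (f : X ≃. X) : pran f = pdom f.symm := by
  ext y
  simp only [pran, pdom, Set.mem_setOf_eq, Ne, Option.eq_none_iff_forall_not_mem]
  constructor
  · rintro ⟨x, hx⟩ h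
    exact h x (f.eq_some_iff.2 hx)
  · intro h
    by_contra hc
    push_neg at hc
    apply h
    intro x hx
    exact hc x (f.eq_some_iff.1 hx)

lemma pdom_bijOn {X : Type*} (f : X ≃. X) :
    Set.BijOn (fun x => (f x).getD x) (pdom f) (pdom f.symm) := by
  refine ⟨?_, ?_, ?_⟩
  · intro x hx
    simp only [pdom, Set.mem_setOf_eq] at hx ⊢
    obtain ⟨y, hy⟩ := Option.ne_none_iff_exists'.1 hx
    rw [hy]
    simp [f.eq_some_iff.2 hy]
  · intro x hx x' hx' h
    obtain ⟨y, hy⟩ := Option.ne_none_iff_exists'.1 hx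
    obtain ⟨y', hy'⟩ := Option.ne_none_iff_exists'.1 hx'
    simp only [hy, hy', Option.getD_some] at h
    subst h
    have := (f.eq_some_iff.2 hy).symm.trans (f.eq_some_iff.2 hy')
    exact Option.some_injective _ this
  · intro y hy
    obtain ⟨x, hx⟩ := Option.ne_none_iff_exists'.1 hy
    have hfx : f x = some y := f.eq_some_iff.1 hx
    exact ⟨x, by simp [pdom, hfx], by simp [hfx]⟩

lemma pran_finite {X : Type*} {f : X ≃. X} (h : (pdom f).Finite) : (pran f).Finite := by
  rw [pran_eq_pdom_symm, ← (pdom_bijOn f).image_eq]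
  exact h.image _

lemma ncard_pran {X : Type*} {f : X ≃. X} : (pran f).ncard = prank f := by
  rw [pran_eq_pdom_symm, prank, ← (pdom_bijOn f).image_eq]
  exact Set.ncard_image_of_injOn (pdom_bijOn f).injOn

lemma key {X : Type*} (φ ψ : X ≃. X) (hφfin : (pdom φ).Finite)
    (h1 : prank ((φ.trans ψ).trans φ) = prank φ) : pran φ ⊆ pdom ψ := by
  have hsub : pdom ((φ.trans ψ).trans φ) ⊆ pdom φ := by
    intro x hx
    simp only [pdom, Set.mem_setOf_eq] at hx ⊢
    intro hc
    apply hx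
    show ((φ.trans ψ) x).bind φ = none
    show (((φ x).bind ψ)).bind φ = none
    rw [hc]; rfl
  have heq : pdom ((φ.trans ψ).trans φ) = pdom φ := by
    apply Set.eq_of_subset_of_ncard_le hsub _ hφfin
    exact le_of_eq h1.symm
  rintro y ⟨x, hx⟩
  have hxdom : x ∈ pdom φ := by simp [pdom, hx]
  rw [← heq] at hxdom
  simp only [pdom, Set.mem_setOf_eq] at hxdom ⊢
  intro hc
  apply hxdom
  show (((φ x).bind ψ)).bind φ = none
  rw [hx]
  simp [hc]

theorem ran_dom_of_rank_eq {X : Type*} (φ ψ : X ≃. X)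
    (hφfin : (pdom φ).Finite) (hψfin : (pdom ψ).Finite)
    (h1 : prank ((φ.trans ψ).trans φ) = prank φ)
    (h2 : prank ((ψ.trans φ).trans ψ) = prank ψ)
    (hle : prank ψ ≤ prank φ) :
    pran φ = pdom ψ ∧ pran ψ = pdom φ := by
  have k1 : pran φ ⊆ pdom ψ := key φ ψ hφfin h1
  have k2 : pran ψ ⊆ pdom φ := key ψ φ hψfin h2
  have hge : prank φ ≤ prank ψ := by
    calc prank φ = (pran φ).ncard := ncard_pran.symm
    _ ≤ (pdom ψ).ncard := Set.ncard_le_ncard k1 hψfin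
    _ = prank ψ := rfl
  have heq : prank φ = prank ψ := le_antisymm hge hle
  constructor
  · apply Set.eq_of_subset_of_ncard_le k1 _ hψfin
    rw [ncard_pran]; exact hle
  · apply Set.eq_of_subset_of_ncard_le k2 _ hφfin
    rw [ncard_pran]; exact hge
end

section
/- Let S be a transitive subsemigroup of IS(X) containing a nonzero finitary element. Then S contains an inverse transitive subsemigroup consisting of finitary elements; in particular S contains a transitive subsemigroup T such that for every b ∈ T the inverse partial bijection b⁻¹ lies in T. -/
/-!
Let `s₀ ∈ S` be a nonzero finitary element of minimal rank `k`, and let `T` consist of the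
elements of `S` of finite rank at most `k`. Composition does not increase rank, and routing any
`x` through `s₀` to any `y` shows that `T` is transitive. For `b ∈ T` of rank `k` with domain
`A`, pick `t ∈ S` sending a point of the image of `b` back into `A`; minimality of `k` forces
`v = b t` to permute the finite set `A`, so some `v ^ N` is the identity on `A`. Then
`t v ^ (2N - 1) ∈ S` agrees with `b⁻¹` on the domain of `b⁻¹` and has rank at most `k`, hence
equals `b⁻¹`. Products are read left to right, as in `PEquiv.trans`.
-/

lemma Set.Finite.exists_iterate_eq_self_of_injOn {α : Type*} {A : Set α} (hA : A.Finite)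
    {g : α → α} (hgA : Set.MapsTo g A A) (hinj : Set.InjOn g A) :
    ∃ N, 0 < N ∧ ∀ a ∈ A, g^[N] a = a := by
  have := hA.fintype
  refine ⟨(Fintype.card A).factorial, Nat.factorial_pos _, fun a ha => ?_⟩
  have hid := Function.injective_iff_iterate_factorial_card_eq_id.1 (hgA.restrict_inj.2 hinj)
  have := congrArg Subtype.val (congrFun hid ⟨a, ha⟩)
  rwa [hgA.iterate_restrict] at this

lemma PEquiv.trans_apply_of_eq_some {α β γ : Type*} {f : α ≃. β} {a : α} {b : β}
    (h : f a = some b) (g : β ≃. γ) : f.trans g a = g b := by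
  change (f a).bind g = g b
  rw [h, Option.bind_some]

section PartialBijections

variable {X : Type*}

lemma apply_eq_some_getD {f : X ≃. X} {x : X} (hx : x ∈ pdom f) :
    f x = some ((f x).getD x) :=
  (Option.getD_of_ne_none hx x).symm

lemma exists_apply_eq_some_of_ne_bot {f : X ≃. X} (hf : f ≠ ⊥) : ∃ x y, f x = some y := by
  by_contra! h
  exact hf (PEquiv.ext fun x => Option.eq_none_iff_forall_ne_some.2 (h x))

lemma exists_of_mem_pdom_trans {f g : X ≃. X} {x : X} (hx : x ∈ pdom (f.trans g)) :
    ∃ y, f x = some y ∧ y ∈ pdom g := by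
  cases hfx : f x with
  | none => simp [pdom, PEquiv.trans_eq_none, hfx] at hx
  | some y => exact ⟨y, rfl, by simpa [pdom, PEquiv.trans_apply_of_eq_some hfx] using hx⟩

lemma pdom_trans_subset (f g : X ≃. X) : pdom (f.trans g) ⊆ pdom f := fun _ hx => by
  obtain ⟨y, hy, -⟩ := exists_of_mem_pdom_trans hx
  simp [pdom, hy]

lemma injOn_getD_pdom (f : X ≃. X) : Set.InjOn (fun x => (f x).getD x) (pdom f) :=
  fun x₁ h₁ x₂ h₂ he => by
    have e₁ := apply_eq_some_getD h₁
    have e₂ := apply_eq_some_getD h₂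
    simp only at he
    rw [← he] at e₂
    exact f.inj e₁ e₂

lemma mapsTo_getD_pdom_trans (f g : X ≃. X) :
    Set.MapsTo (fun x => (f x).getD x) (pdom (f.trans g)) (pdom g) := fun x hx => by
  obtain ⟨y, hy, hgy⟩ := exists_of_mem_pdom_trans hx
  simpa [hy] using hgy

lemma pdom_trans_finite {g : X ≃. X} (hg : (pdom g).Finite) (f : X ≃. X) :
    (pdom (f.trans g)).Finite :=
  hg.of_injOn (mapsTo_getD_pdom_trans f g) ((injOn_getD_pdom f).mono (pdom_trans_subset f g))

lemma ncard_pdom_trans_le {g : X ≃. X} (hg : (pdom g).Finite) (f : X ≃. X) :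
    (pdom (f.trans g)).ncard ≤ (pdom g).ncard :=
  Set.ncard_le_ncard_of_injOn _ (mapsTo_getD_pdom_trans f g)
    ((injOn_getD_pdom f).mono (pdom_trans_subset f g)) hg

lemma pdom_symm_eq_image (f : X ≃. X) : pdom f.symm = (fun x => (f x).getD x) '' pdom f := by
  ext y
  constructor
  · intro hy
    obtain ⟨x, hx⟩ := Option.ne_none_iff_exists'.1 hy
    have hfx := f.eq_some_iff.1 hx
    exact ⟨x, by simp [pdom, hfx], by simp [hfx]⟩
  · rintro ⟨x, hx, rfl⟩
    simp [pdom, f.eq_some_iff.2 (apply_eq_some_getD hx)]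

lemma pdom_symm_finite {f : X ≃. X} (hf : (pdom f).Finite) : (pdom f.symm).Finite :=
  pdom_symm_eq_image f ▸ hf.image _

lemma ncard_pdom_symm (f : X ≃. X) : (pdom f.symm).ncard = (pdom f).ncard := by
  rw [pdom_symm_eq_image, (injOn_getD_pdom f).ncard_image]

lemma eq_of_forall_mem_pdom_apply_eq {f g : X ≃. X} (hf : (pdom f).Finite)
    (hcard : (pdom f).ncard ≤ (pdom g).ncard) (h : ∀ y ∈ pdom g, f y = g y) : f = g := by
  have hsub : pdom g ⊆ pdom f := fun y hy => by simpa [pdom, h y hy] using hy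
  have hdom : pdom g = pdom f := Set.eq_of_subset_of_ncard_le hsub hcard hf
  ext1 y
  by_cases hy : y ∈ pdom g
  · exact h y hy
  · have hy' : y ∉ pdom f := hdom ▸ hy
    simp only [pdom, Set.mem_ofPred_eq, not_not] at hy hy'
    rw [hy, hy']

def transPow (v : X ≃. X) : ℕ → X ≃. X
  | 0 => PEquiv.refl X
  | n + 1 => v.trans (transPow v n)

lemma transPow_succ_mem {S : Set (X ≃. X)} (hS : IsSubsemigroup S) {v : X ≃. X} (hv : v ∈ S)
    (n : ℕ) : transPow v (n + 1) ∈ S := by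
  induction n with
  | zero => simpa [transPow, PEquiv.trans_refl] using hv
  | succ n ih => exact hS v hv _ ih

lemma transPow_apply_eq_iterate {v : X ≃. X} {A : Set X} {g : X → X} (hgA : Set.MapsTo g A A)
    (hv : ∀ a ∈ A, v a = some (g a)) (n : ℕ) : ∀ a ∈ A, transPow v n a = some (g^[n] a) := by
  induction n with
  | zero => intro a _; rfl
  | succ n ih =>
    intro a ha
    rw [transPow, PEquiv.trans_apply_of_eq_some (hv a ha), Function.iterate_succ_apply]
    exact ih (g a) (hgA ha)

lemma exists_transPow_succ_apply_eq_self {v : X ≃. X} {A : Set X} (hA : A.Finite) {g : X → X}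
    (hgA : Set.MapsTo g A A) (hinj : Set.InjOn g A) (hv : ∀ a ∈ A, v a = some (g a)) :
    ∃ M, ∀ a ∈ A, transPow v (M + 1) (g a) = some a := by
  obtain ⟨N, hN, hper⟩ := hA.exists_iterate_eq_self_of_injOn hgA hinj
  -- `v ^ (2N - 1)` inverts `v` on `A`, because `v ^ N` is the identity there.
  refine ⟨N + N - 2, fun a ha => ?_⟩
  rw [transPow_apply_eq_iterate hgA hv _ _ (hgA ha), ← Function.iterate_succ_apply,
    show (N + N - 2 + 1).succ = N + N by omega, Function.iterate_add_apply, hper a ha, hper a ha]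

end PartialBijections

section Semigroups

variable {X : Type*} {S : Set (X ≃. X)}

lemma exists_ncard_pdom_minimal (h : ∃ f ∈ S, f ≠ ⊥ ∧ (pdom f).Finite) :
    ∃ s₀ ∈ S, s₀ ≠ ⊥ ∧ (pdom s₀).Finite ∧
      ∀ s ∈ S, s ≠ ⊥ → (pdom s).Finite → (pdom s₀).ncard ≤ (pdom s).ncard := by
  obtain ⟨f, hf⟩ := h
  set P := {s | s ∈ S ∧ s ≠ ⊥ ∧ (pdom s).Finite}
  obtain ⟨hS, hne, hfin⟩ := Function.argminOn_mem (fun s => (pdom s).ncard) P ⟨f, hf⟩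
  exact ⟨_, hS, hne, hfin, fun s hs hne hfin =>
    Function.argminOn_le (fun s => (pdom s).ncard) P (show s ∈ P from ⟨hs, hne, hfin⟩)⟩

def finitaryOfRankLE (S : Set (X ≃. X)) (k : ℕ) : Set (X ≃. X) :=
  {s ∈ S | (pdom s).Finite ∧ (pdom s).ncard ≤ k}

lemma IsSubsemigroup.finitaryOfRankLE (hS : IsSubsemigroup S) (k : ℕ) :
    IsSubsemigroup (finitaryOfRankLE S k) := by
  rintro f ⟨hfS, hffin, hfk⟩ g ⟨hgS, -, -⟩
  have hsub := pdom_trans_subset f g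
  exact ⟨hS f hfS g hgS, hffin.subset hsub, (Set.ncard_le_ncard hsub hffin).trans hfk⟩

lemma IsTransitiveSet.finitaryOfRankLE (hS : IsSubsemigroup S) (hStr : IsTransitiveSet S)
    {k : ℕ} {s₀ : X ≃. X} (hs₀ : s₀ ∈ finitaryOfRankLE S k) (hne : s₀ ≠ ⊥) :
    IsTransitiveSet (finitaryOfRankLE S k) := by
  obtain ⟨hs₀S, hs₀fin, hs₀k⟩ := hs₀
  intro x y
  obtain ⟨a, c, hac⟩ := exists_apply_eq_some_of_ne_bot hne
  obtain ⟨f, hfS, hfx⟩ := hStr x a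
  obtain ⟨g, hgS, hgy⟩ := hStr c y
  have hsub := pdom_trans_subset (f.trans s₀) g
  have hfin := pdom_trans_finite hs₀fin f
  refine ⟨(f.trans s₀).trans g, ⟨hS _ (hS f hfS s₀ hs₀S) g hgS, hfin.subset hsub, ?_⟩, ?_⟩
  · calc (pdom ((f.trans s₀).trans g)).ncard ≤ (pdom (f.trans s₀)).ncard :=
          Set.ncard_le_ncard hsub hfin
      _ ≤ (pdom s₀).ncard := ncard_pdom_trans_le hs₀fin f
      _ ≤ k := hs₀k
  · rw [PEquiv.trans_apply_of_eq_some (PEquiv.trans_apply_of_eq_some hfx s₀ ▸ hac), hgy]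

lemma symm_mem_of_ncard_pdom_minimal (hS : IsSubsemigroup S) (hStr : IsTransitiveSet S)
    {b : X ≃. X} (hbS : b ∈ S) (hb : b ≠ ⊥) (hbfin : (pdom b).Finite)
    (hmin : ∀ s ∈ S, s ≠ ⊥ → (pdom s).Finite → (pdom b).ncard ≤ (pdom s).ncard) :
    b.symm ∈ S := by
  obtain ⟨x₀, y₀, hb₀⟩ := exists_apply_eq_some_of_ne_bot hb
  obtain ⟨t, htS, ht₀⟩ := hStr y₀ x₀
  set v := b.trans t
  have hvS : v ∈ S := hS b hbS t htS
  -- `v.trans b` sends `x₀` to `y₀`, so by minimality it is defined on all of `pdom b`.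
  have hdom : pdom (v.trans b) = pdom b := by
    have hsub : pdom (v.trans b) ⊆ pdom b :=
      (pdom_trans_subset _ _).trans (pdom_trans_subset _ _)
    have hne : v.trans b ≠ ⊥ := by
      have hv₀ : v x₀ = some x₀ := by rw [PEquiv.trans_apply_of_eq_some hb₀, ht₀]
      intro h
      simpa [PEquiv.trans_apply_of_eq_some hv₀, hb₀, PEquiv.bot_apply] using
        congrArg (· x₀) h
    exact Set.eq_of_subset_of_ncard_le hsub (hmin _ (hS v hvS b hbS) hne (hbfin.subset hsub))
      hbfin
  set g := fun x => (v x).getD x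
  have hvg : ∀ a ∈ pdom b, v a = some (g a) := fun a ha =>
    apply_eq_some_getD (pdom_trans_subset v b (hdom ▸ ha))
  have hgA : Set.MapsTo g (pdom b) (pdom b) := hdom ▸ mapsTo_getD_pdom_trans v b
  obtain ⟨M, hu⟩ := exists_transPow_succ_apply_eq_self hbfin hgA
    ((injOn_getD_pdom v).mono (hdom ▸ pdom_trans_subset v b)) hvg
  set u := transPow v (M + 1)
  have hupdom : pdom u ⊆ pdom b := (pdom_trans_subset v _).trans (pdom_trans_subset b t)
  have hwS : t.trans u ∈ S := hS t htS u (transPow_succ_mem hS hvS M)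
  refine eq_of_forall_mem_pdom_apply_eq (g := b.symm)
    (pdom_trans_finite (hbfin.subset hupdom) t) ?_ ?_ ▸ hwS
  · calc (pdom (t.trans u)).ncard ≤ (pdom u).ncard :=
          ncard_pdom_trans_le (hbfin.subset hupdom) t
      _ ≤ (pdom b).ncard := Set.ncard_le_ncard hupdom hbfin
      _ = (pdom b.symm).ncard := (ncard_pdom_symm b).symm
  · intro y hy
    obtain ⟨a, hya⟩ := Option.ne_none_iff_exists'.1 hy
    have hay : b a = some y := b.eq_some_iff.1 hya
    have ha : a ∈ pdom b := by simp [pdom, hay]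
    have hty : t y = some (g a) := by rw [← hvg a ha, PEquiv.trans_apply_of_eq_some hay]
    rw [PEquiv.trans_apply_of_eq_some hty, hu a ha, hya]

end Semigroups

/-- A transitive subsemigroup of `IS(X)` containing a nonzero finitary element contains
an inverse transitive subsemigroup consisting of finitary elements. -/
theorem exists_inverse_transitive_subsemigroup {X : Type*} (S : Set (X ≃. X))
    (hS : IsSubsemigroup S) (hStr : IsTransitiveSet S)
    (hfin : ∃ f ∈ S, f ≠ (⊥ : X ≃. X) ∧ (pdom f).Finite) :
    ∃ T ⊆ S, IsSubsemigroup T ∧ IsTransitiveSet T ∧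
      (∀ b ∈ T, (pdom b).Finite) ∧ (∀ b ∈ T, b.symm ∈ T) := by
  obtain ⟨s₀, hs₀S, hs₀ne, hs₀fin, hs₀min⟩ := exists_ncard_pdom_minimal hfin
  set k := (pdom s₀).ncard
  refine ⟨finitaryOfRankLE S k, fun s hs => hs.1, hS.finitaryOfRankLE k,
    hStr.finitaryOfRankLE hS ⟨hs₀S, hs₀fin, le_rfl⟩ hs₀ne, fun b hb => hb.2.1, ?_⟩
  intro b hbT
  by_cases hb : b = ⊥
  · rwa [hb, PEquiv.symm_bot, ← hb]
  · obtain ⟨hbS, hbfin, hbk⟩ := hbT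
    exact ⟨symm_mem_of_ncard_pdom_minimal hS hStr hbS hb hbfin
      fun s hs hne hfin => hbk.trans (hs₀min s hs hne hfin),
      pdom_symm_finite hbfin, (ncard_pdom_symm b).trans_le hbk⟩
end

section
/- Let X be infinite and let S be the set of all partial bijections φ of X with dom(φ) = X and ran(φ) ≠ X. Then S is a subsemigroup of IS(X), S is transitive, and S contains no idempotent element; consequently S contains no inverse subsemigroup and no nonzero finitary element. -/
open Classical in
/-- A total PEquiv from an injective function. -/
noncomputable def injToPEquiv {X : Type*} (f : X → X) (hf : Function.Injective f) : X ≃. X where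
  toFun x := some (f x)
  invFun y := if h : ∃ x, f x = y then some h.choose else none
  inv a b := by
    constructor
    · intro h
      by_cases hb : ∃ x, f x = b
      · simp only [dif_pos hb, Option.mem_def, Option.some_inj] at h
        subst h
        simp [hb.choose_spec]
      · simp [dif_neg hb] at h
    · intro h
      simp only [Option.mem_def, Option.some_inj] at h
      subst h
      have hb : ∃ x, f x = f a := ⟨a, rfl⟩
      simp only [dif_pos hb, Option.mem_def, Option.some_inj]
      exact hf hb.choose_spec

@[simp] theorem injToPEquiv_apply {X : Type*} (f : X → X) (hf : Function.Injective f) (x : X) :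
    injToPEquiv f hf x = some (f x) := rfl

/-- For infinite `X`, the set of everywhere-defined, non-surjective partial bijections is a
transitive idempotent-free subsemigroup of `IS(X)`: it contains no inverse subsemigroup and
no nonzero finitary element. -/
theorem everywhere_defined_nonsurjective_example {X : Type*} (hX : Infinite X) :
    let S : Set (X ≃. X) := {φ | pdom φ = Set.univ ∧ pran φ ≠ Set.univ}
    IsSubsemigroup S ∧ IsTransitiveSet S ∧
      (∀ φ ∈ S, φ.trans φ ≠ φ) ∧
      (¬ ∃ T ⊆ S, T.Nonempty ∧ IsSubsemigroup T ∧ ∀ b ∈ T, b.symm ∈ T) ∧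
      (∀ φ ∈ S, φ ≠ (⊥ : X ≃. X) → ¬ (pdom φ).Finite) := by
  classical
  intro S
  have htotal : ∀ φ : X ≃. X, pdom φ = Set.univ → ∀ x : X, ∃ z, φ x = some z := by
    intro φ hφ x
    have : φ x ≠ none := by
      have := hφ ▸ (Set.mem_univ x)
      exact this
    cases h : φ x with
    | none => exact absurd h this
    | some z => exact ⟨z, rfl⟩
  refine ⟨?_, ?_, ?_, ?_, ?_⟩
  · -- subsemigroup
    rintro f ⟨hfd, hfr⟩ g ⟨hgd, hgr⟩
    constructor
    · ext x
      simp only [pdom, Set.mem_setOf_eq, Set.mem_univ, iff_true]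
      obtain ⟨a, ha⟩ := htotal f hfd x
      obtain ⟨b, hb⟩ := htotal g hgd a
      have : (f.trans g) x = some b := (PEquiv.trans_eq_some f g x b).mpr ⟨a, ha, hb⟩
      simp [this]
    · intro h
      apply hgr
      ext y
      simp only [Set.mem_univ, iff_true]
      have hy : y ∈ pran (f.trans g) := h ▸ Set.mem_univ y
      obtain ⟨x, hx⟩ := hy
      rw [PEquiv.trans_eq_some] at hx
      obtain ⟨b, _, hb⟩ := hx
      exact ⟨b, hb⟩
  · -- transitive
    intro x y
    obtain ⟨e⟩ := Infinite.natEmbedding X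
    rename_i einj
    set ef : ℕ → X := e with hef
    have einj' : Function.Injective ef := einj
    -- shift map g
    set g : X → X := fun z => if h : ∃ n, ef n = z then ef (h.choose + 1) else z with hg
    have hgval : ∀ n, g (ef n) = ef (n + 1) := by
      intro n
      have h : ∃ m, ef m = ef n := ⟨n, rfl⟩
      simp only [hg, dif_pos h]
      congr 1
      have := h.choose_spec
      exact congrArg (· + 1) (einj' this)
    have hgid : ∀ z, (¬ ∃ n, ef n = z) → g z = z := by
      intro z hz; simp [hg, dif_neg hz]
    have hginj : Function.Injective g := by
      intro a b hab
      by_cases ha : ∃ n, ef n = a <;> by_cases hb : ∃ n, ef n = b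
      · obtain ⟨m, hm⟩ := ha; obtain ⟨n, hn⟩ := hb
        subst hm hn
        rw [hgval, hgval] at hab
        have := einj' hab
        exact congrArg ef (Nat.succ_injective this)
      · obtain ⟨m, hm⟩ := ha
        subst hm
        rw [hgval, hgid b hb] at hab
        exact absurd ⟨m + 1, hab⟩ hb
      · obtain ⟨n, hn⟩ := hb
        subst hn
        rw [hgid a ha, hgval] at hab
        exact absurd ⟨n + 1, hab.symm⟩ ha
      · rw [hgid a ha, hgid b hb] at hab; exact hab
    have hgns : ∀ z, g z ≠ ef 0 := by
      intro z hz
      by_cases h : ∃ n, ef n = z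
      · obtain ⟨n, hn⟩ := h; subst hn
        rw [hgval] at hz
        exact Nat.succ_ne_zero n (einj' hz)
      · rw [hgid z h] at hz
        exact h ⟨0, hz.symm⟩
    set sw : X ≃ X := Equiv.swap (g x) y with hsw
    set f : X → X := fun z => sw (g z) with hf
    have hfinj : Function.Injective f := fun a b h => hginj (sw.injective h)
    have hfx : f x = y := by simp [hf, hsw]
    refine ⟨injToPEquiv f hfinj, ⟨?_, ?_⟩, by simp [hfx]⟩
    · ext z; simp [pdom]
    · intro h
      have : sw (ef 0) ∈ pran (injToPEquiv f hfinj) := h ▸ Set.mem_univ _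
      obtain ⟨z, hz⟩ := this
      simp only [injToPEquiv_apply, Option.some_inj, hf] at hz
      exact hgns z (sw.injective hz)
  · -- no idempotents
    rintro φ ⟨hd, hr⟩ heq
    apply hr
    have hfix : ∀ x, φ x = some x := by
      intro x
      obtain ⟨z, hz⟩ := htotal φ hd x
      have h2 : (φ.trans φ) x = some z := by rw [heq]; exact hz
      rw [PEquiv.trans_eq_some] at h2
      obtain ⟨b, hb, hbz⟩ := h2
      rw [hz] at hb
      cases hb
      -- hz : φ x = some z, hbz : φ z = some z
      have : x = z := PEquiv.inj φ (Option.mem_def.mpr hz) (Option.mem_def.mpr hbz)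
      rw [this, hbz]
    ext y
    simp only [Set.mem_univ, iff_true]
    exact ⟨y, hfix y⟩
  · -- no inverse subsemigroup
    rintro ⟨T, hTS, ⟨b, hb⟩, _, hsymm⟩
    have hbS := hTS hb
    have hbsS := hTS (hsymm b hb)
    apply hbS.2
    ext y
    simp only [Set.mem_univ, iff_true]
    obtain ⟨z, hz⟩ := htotal b.symm hbsS.1 y
    exact ⟨z, (PEquiv.eq_some_iff b).mp hz⟩
  · -- no finitary elements
    rintro φ ⟨hd, _⟩ _ hfin
    rw [hd] at hfin
    exact Set.infinite_univ hfin
end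

section
/- Let S be a semitransitive subsemigroup of IS_n (partial bijections of a finite set X with |X| = n ≥ 1) that is not transitive. Then S contains the empty partial bijection (the zero of IS_n). -/
def IsSemitransitiveSet {X : Type*} (S : Set (X ≃. X)) : Prop :=
  ∀ x y : X, ∃ f ∈ S, f x = some y ∨ f y = some x

namespace PEquiv

variable {α β γ : Type*}

def dom (f : α ≃. β) : Set α := {a | (f a).isSome}

theorem dom_eq_empty_iff {f : α ≃. β} : f.dom = ∅ ↔ f = ⊥ := by
  simp [dom, Set.eq_empty_iff_forall_notMem, PEquiv.ext_iff]

theorem dom_trans_subset (f : α ≃. β) (g : β ≃. γ) : (f.trans g).dom ⊆ f.dom :=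
  fun _ => Option.isSome_of_isSome_bind

theorem isSome_of_ncard_dom_le [Finite α] {f : α ≃. β} {g : β ≃. γ}
    (h : f.dom.ncard ≤ (f.trans g).dom.ncard) {a : α} {b : β} (hab : f a = some b) :
    (g b).isSome := by
  have ha : a ∈ (f.trans g).dom := by
    rw [Set.eq_of_subset_of_ncard_le (dom_trans_subset f g) h]
    simp [dom, hab]
  change ((f a).bind g).isSome at ha
  simpa [hab] using ha

theorem image_eq_of_mapsTo [Finite α] {f : α ≃. α} {A : Set α}
    (h : Set.MapsTo f A (some '' A)) : f '' A = some '' A := by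
  have hinj : Set.InjOn f A := fun a ha a' _ heq => by
    obtain ⟨b, -, hb⟩ := h ha
    exact f.inj (b := b) hb.symm (heq ▸ hb.symm)
  refine Set.eq_of_subset_of_ncard_le h.image_subset ?_
  rw [hinj.ncard_image, Set.ncard_image_of_injective _ (Option.some_injective _)]

theorem exists_perm_toPEquiv_eq [Finite α] {f : α ≃. α} (hf : ∀ a, (f a).isSome) :
    ∃ σ : Equiv.Perm α, σ.toPEquiv = f := by
  choose F hF using fun a => Option.isSome_iff_exists.1 (hf a)
  have hinj : F.Injective := fun a a' h => f.inj (b := F a) (hF a) (h ▸ hF a')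
  exact ⟨Equiv.ofBijective F (Finite.injective_iff_bijective.1 hinj),
    PEquiv.ext fun a => by simp [hF]⟩

end PEquiv

theorem inv_mem_of_forall_mul_mem {G : Type*} [Group G] [Finite G] {T : Set G}
    (hT : ∀ a ∈ T, ∀ b ∈ T, a * b ∈ T) {a : G} (ha : a ∈ T) : a⁻¹ ∈ T := by
  have hpow : ∀ n, a ^ (n + 1) ∈ T := fun n => by
    induction n with
    | zero => simpa
    | succ n ih => rw [pow_succ]; exact hT _ ih _ ha
  have hord := orderOf_pos a
  -- `a⁻¹ = a ^ (2 * orderOf a - 1)`, a positive power of `a`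
  convert hpow (2 * orderOf a - 2) using 1
  rw [show 2 * orderOf a - 2 + 1 = orderOf a * 2 - 1 by omega, pow_sub a (by omega), pow_mul,
    pow_orderOf_eq_one, one_pow, pow_one, one_mul]

open PEquiv

section

variable {X : Type*} [Finite X] {S : Set (X ≃. X)}

theorem IsSemitransitiveSet.isTransitiveSet_of_forall_isSome
    (hS : IsSubsemigroup S) (hsemi : IsSemitransitiveSet S)
    (htot : ∀ f ∈ S, ∀ x, (f x).isSome) : IsTransitiveSet S := by
  let T : Set (Equiv.Perm X) := {σ | σ.toPEquiv ∈ S}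
  have hT : ∀ σ ∈ T, ∀ τ ∈ T, σ * τ ∈ T := fun σ hσ τ hτ => by
    simpa [T, Equiv.Perm.mul_def, Equiv.toPEquiv_trans] using hS _ hτ _ hσ
  intro x y
  obtain ⟨f, hf, hxy | hyx⟩ := hsemi x y
  · exact ⟨f, hf, hxy⟩
  obtain ⟨σ, rfl⟩ := exists_perm_toPEquiv_eq (htot f hf)
  refine ⟨σ⁻¹.toPEquiv, inv_mem_of_forall_mul_mem hT hf, ?_⟩
  simp only [Equiv.toPEquiv_apply, Option.some.injEq] at hyx ⊢
  rw [Equiv.Perm.inv_eq_iff_eq, hyx]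

theorem IsSemitransitiveSet.eq_univ_of_mapsTo (hsemi : IsSemitransitiveSet S)
    {A : Set X} (hA : A.Nonempty) (hmaps : ∀ f ∈ S, Set.MapsTo f A (some '' A)) :
    A = Set.univ := by
  refine Set.eq_univ_of_forall fun x => ?_
  obtain ⟨a, ha⟩ := hA
  obtain ⟨f, hf, hxa | hax⟩ := hsemi x a
  · obtain ⟨a', ha', hfa'⟩ : some a ∈ f '' A := by
      rw [image_eq_of_mapsTo (hmaps f hf)]
      exact Set.mem_image_of_mem _ ha
    rwa [f.inj (b := a) hxa hfa']
  · obtain ⟨x', hx', hxx'⟩ := hmaps f hf ha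
    rwa [← Option.some_injective _ (hxx'.trans hax)]

theorem isSome_of_apply_eq_some_of_minimal (hS : IsSubsemigroup S) {t : X ≃. X} (htS : t ∈ S)
    (htmin : ∀ f ∈ S, t.dom.ncard ≤ f.dom.ncard) {f : X ≃. X} (hf : f ∈ S) {a b : X}
    (hab : t a = some b) : (f b).isSome :=
  isSome_of_ncard_dom_le (htmin _ (hS t htS f hf)) hab

theorem mapsTo_dom_of_minimal (hS : IsSubsemigroup S) {t : X ≃. X} (htS : t ∈ S)
    (htmin : ∀ f ∈ S, t.dom.ncard ≤ f.dom.ncard) {f : X ≃. X} (hf : f ∈ S) :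
    Set.MapsTo f t.dom (some '' t.dom) := by
  have ht_image : t '' t.dom = some '' t.dom := by
    refine image_eq_of_mapsTo fun a ha => ?_
    obtain ⟨b, hb⟩ := Option.isSome_iff_exists.1 ha
    exact ⟨b, isSome_of_apply_eq_some_of_minimal hS htS htmin htS hb, hb.symm⟩
  intro b hb
  obtain ⟨a, -, hab⟩ : some b ∈ t '' t.dom := ht_image ▸ Set.mem_image_of_mem _ hb
  obtain ⟨c, hc⟩ :=
    Option.isSome_iff_exists.1 (isSome_of_apply_eq_some_of_minimal hS htS htmin hf hab)
  -- `t.trans f` sends `a` to `c` and has minimal rank as well, so `t` is defined at `c`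
  have hsmin : ∀ g ∈ S, (t.trans f).dom.ncard ≤ g.dom.ncard := fun g hg =>
    (Set.ncard_le_ncard (dom_trans_subset t f)).trans (htmin g hg)
  exact ⟨c, isSome_of_apply_eq_some_of_minimal hS (hS t htS f hf) hsmin htS
    ((trans_eq_some _ _ _ _).2 ⟨b, hab, hc⟩), hc.symm⟩

end

theorem semitransitive_not_transitive_contains_zero_general {X : Type*} [Fintype X]
    (S : Set (X ≃. X))
    (hS : IsSubsemigroup S) (hsemi : IsSemitransitiveSet S) (htr : ¬ IsTransitiveSet S) :
    (⊥ : X ≃. X) ∈ S := by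
  obtain ⟨x⟩ : Nonempty X := not_isEmpty_iff.1 fun _ => htr fun x => isEmptyElim x
  obtain ⟨f, hf, -⟩ := hsemi x x
  set t := Function.argminOn (fun f : X ≃. X => f.dom.ncard) S ⟨f, hf⟩
  have htS : t ∈ S := Function.argminOn_mem _ _ _
  have htmin : ∀ g ∈ S, t.dom.ncard ≤ g.dom.ncard := fun g hg =>
    Function.argminOn_le (fun f : X ≃. X => f.dom.ncard) _ hg
  by_cases ht : t = ⊥
  · exact ht ▸ htS
  have hdom : t.dom = Set.univ :=
    hsemi.eq_univ_of_mapsTo (Set.nonempty_iff_ne_empty.2 (dom_eq_empty_iff.not.2 ht))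
      fun g hg => mapsTo_dom_of_minimal hS htS htmin hg
  refine absurd (hsemi.isTransitiveSet_of_forall_isSome hS fun g hg y => ?_) htr
  obtain ⟨z, -, hz⟩ := mapsTo_dom_of_minimal hS htS htmin hg (hdom ▸ Set.mem_univ y)
  simp [← hz]

/-- A semitransitive but not transitive subsemigroup of `IS_n` contains the zero
(the empty partial bijection). -/
theorem semitransitive_not_transitive_contains_zero {X : Type*} [Fintype X]
    (n : ℕ) (hn : 1 ≤ n) (hcard : Fintype.card X = n) (S : Set (X ≃. X))
    (hS : IsSubsemigroup S) (hsemi : IsSemitransitiveSet S) (htr : ¬ IsTransitiveSet S) :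
    (⊥ : X ≃. X) ∈ S :=
  semitransitive_not_transitive_contains_zero_general S hS hsemi htr
end
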